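/- Consider the two-bank financial network with external assets e_1 = e_2 = 0, liabilities l_{12} = l_{21} = 1, no default costs (α = β = 1), and no cash injections. Then: (i) the maximal clearing payments of the full network are p_{12} = p_{21} = 1, so its systemic liquidity is 2; (ii) the strategy profile in which each bank removes its (unique) incoming edge is a pure Nash equilibrium of the edge-removal game, and its systemic liquidity is 0. Consequently, the Effect of Anarchy of edge-removal games without cash injections is unbounded. -/
import Mathlib


open Finset

/-- `p` is a proportional clearing payment matrix for the network with external assets `e`,
liabilities `l` and default costs `α, β`. -/
def IsClearing {ι : Type*} [Fintype ι] (α β : ℝ) (e : ι → ℝ) (l : ι → ι → ℝ)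
    (p : ι → ι → ℝ) : Prop :=
  (∀ i j, 0 ≤ p i j) ∧ (∀ i j, p i j ≤ l i j) ∧
  (∀ i, (∑ j, l i j) ≤ e i + (∑ j, p j i) → ∀ j, p i j = l i j) ∧
  (∀ i, e i + (∑ j, p j i) < (∑ j, l i j) →
    ∀ j, p i j = (α * e i + β * (∑ k, p k i)) * l i j / (∑ k, l i k))

/-- `p` is the maximal clearing payment matrix. -/
def IsMaxClearing {ι : Type*} [Fintype ι] (α β : ℝ) (e : ι → ℝ) (l p : ι → ι → ℝ) : Prop :=
  IsClearing α β e l p ∧ ∀ q, IsClearing α β e l q → ∀ i j, q i j ≤ p i j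

/-- Systemic liquidity: the sum of all payments. -/
def liquidity {ι : Type*} [Fintype ι] (p : ι → ι → ℝ) : ℝ := ∑ i, ∑ j, p i j

/-- Total assets of bank `i` under payments `p`. -/
def assets {ι : Type*} [Fintype ι] (e : ι → ℝ) (p : ι → ι → ℝ) (i : ι) : ℝ :=
  e i + ∑ j, p j i

/-- The liabilities obtained from `l` when each bank `j` removes the incoming edges from
the banks in `s j`. -/
def removeEdges {ι : Type*} [DecidableEq ι] (l : ι → ι → ℝ) (s : ι → Finset ι) :
    ι → ι → ℝ :=
  fun i j => if i ∈ s j then 0 else l i j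

/-- If the diagonal liabilities vanish, both banks have no external assets, and at least
one of the two off-diagonal liabilities vanishes, then every clearing payment matrix is
identically zero. -/
lemma allzero_of_clearing (L p : Fin 2 → Fin 2 → ℝ)
    (hp : IsClearing 1 1 (fun _ => (0:ℝ)) L p)
    (h00 : L 0 0 = 0) (h11 : L 1 1 = 0) (hoff : L 0 1 = 0 ∨ L 1 0 = 0) :
    ∀ i j, p i j = 0 := by
  obtain ⟨h0, hle, _, hdef⟩ := hp
  simp only [Fin.sum_univ_two] at hdef
  have p00 : p 0 0 = 0 := le_antisymm (h00 ▸ hle 0 0) (h0 0 0)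
  have p11 : p 1 1 = 0 := le_antisymm (h11 ▸ hle 1 1) (h0 1 1)
  rcases hoff with hoff | hoff
  · have p01 : p 0 1 = 0 := le_antisymm (hoff ▸ hle 0 1) (h0 0 1)
    have p10 : p 1 0 = 0 := by
      rcases le_or_gt (L 1 0) 0 with h | h
      · exact le_antisymm ((hle 1 0).trans h) (h0 1 0)
      · have := hdef 1 (by rw [p01, p11, h11]; simpa using h) 0
        rw [p01, p11] at this
        rw [this]; ring
    intro i j; fin_cases i <;> fin_cases j <;> assumption
  · have p10 : p 1 0 = 0 := le_antisymm (hoff ▸ hle 1 0) (h0 1 0)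
    have p01 : p 0 1 = 0 := by
      rcases le_or_gt (L 0 1) 0 with h | h
      · exact le_antisymm ((hle 0 1).trans h) (h0 0 1)
      · have := hdef 0 (by rw [p00, p10, h00]; simpa using h) 1
        rw [p00, p10] at this
        rw [this]; ring
    intro i j; fin_cases i <;> fin_cases j <;> assumption

/-- The two-bank network with `e = 0` and `l₁₂ = l₂₁ = 1`, no default costs, no cash
injections: (i) the maximal clearing payments of the full network are `p₁₂ = p₂₁ = 1`
with systemic liquidity 2; (ii) the profile in which each bank removes its unique
incoming edge is a pure Nash equilibrium of the edge-removal game with systemic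
liquidity 0.  Hence the Effect of Anarchy is unbounded. -/
theorem two_cycle_effect_of_anarchy_unbounded
    (e : Fin 2 → ℝ) (he : e = fun _ => 0)
    (l : Fin 2 → Fin 2 → ℝ) (hl : l = fun i j => if i = j then 0 else 1)
    (Pay : (Fin 2 → Finset (Fin 2)) → Fin 2 → Fin 2 → ℝ)
    (hPay : ∀ s, IsMaxClearing 1 1 e (removeEdges l s) (Pay s)) :
    -- (i) the maximal clearing payments of the full network pay everything
    (IsMaxClearing 1 1 e l (fun i j => if i = j then 0 else 1) ∧
      liquidity (fun i j : Fin 2 => if i = j then (0:ℝ) else 1) = 2)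
    -- (ii) mutual removal is a pure Nash equilibrium with liquidity 0
    ∧ (∀ (j : Fin 2) (R : Finset (Fin 2)),
        assets e (Pay (Function.update (fun i : Fin 2 => ({i + 1} : Finset (Fin 2))) j R)) j
          ≤ assets e (Pay (fun i : Fin 2 => ({i + 1} : Finset (Fin 2)))) j)
    ∧ liquidity (Pay (fun i : Fin 2 => ({i + 1} : Finset (Fin 2)))) = 0 := by
  subst he hl
  -- the baseline profile removes all edges, so all baseline payments vanish
  have hbase : ∀ i j, Pay (fun i : Fin 2 => ({i + 1} : Finset (Fin 2))) i j = 0 := by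
    obtain ⟨⟨h0, hle, -, -⟩, -⟩ := hPay (fun i : Fin 2 => ({i + 1} : Finset (Fin 2)))
    intro i j
    have hz : removeEdges (fun i j : Fin 2 => if i = j then (0:ℝ) else 1)
        (fun i : Fin 2 => ({i + 1} : Finset (Fin 2))) i j = 0 := by
      fin_cases i <;> fin_cases j <;> simp [removeEdges]
    exact le_antisymm (hz ▸ hle i j) (h0 i j)
  refine ⟨⟨⟨⟨?_, ?_, ?_, ?_⟩, ?_⟩, ?_⟩, ?_, ?_⟩
  · intro i j; simp only []; split <;> norm_num
  · intro i j; exact le_rfl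
  · intro i _ j; rfl
  · intro i h j
    exfalso
    fin_cases i <;> simp [Fin.sum_univ_two] at h
  · intro q hq i j
    exact hq.2.1 i j
  · simp [liquidity, Fin.sum_univ_two]; norm_num
  · intro j R
    have hall : ∀ a b,
        Pay (Function.update (fun i : Fin 2 => ({i + 1} : Finset (Fin 2))) j R) a b = 0 := by
      apply allzero_of_clearing _ _ (hPay _).1
      · fin_cases j <;> simp [removeEdges, Function.update]
      · fin_cases j <;> simp [removeEdges, Function.update]
      · fin_cases j
        · left; simp [removeEdges, Function.update]
        · right; simp [removeEdges, Function.update]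
    simp [assets, Fin.sum_univ_two, hall, hbase]
  · simp [liquidity, Fin.sum_univ_two, hbase]
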